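/- Let X, Z ∈ ℝ^{d×r} satisfy ‖XXᵀ − ZZᵀ‖_F ≤ ρ·λ_min(ZᵀZ), ρ < 1/2, and suppose XᵀX is invertible. Then ‖ZZᵀX(XᵀX)^{−2}Xᵀ‖ ≤ 1/(1−ρ), where ‖·‖ denotes the spectral norm. -/

import Mathlib

open Matrix BigOperators

noncomputable section

/-- Frobenius norm of a real matrix. -/
def frob {m n : ℕ} (A : Matrix (Fin m) (Fin n) ℝ) : ℝ :=
  Real.sqrt (∑ i, ∑ j, (A i j) ^ 2)

/-- Trace inner product `⟨A,B⟩ = tr(AᵀB)`. -/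
def mip {m n : ℕ} (A B : Matrix (Fin m) (Fin n) ℝ) : ℝ := (Aᵀ * B).trace

open Classical in
/-- Smallest eigenvalue of a Hermitian matrix (junk value 0 otherwise). -/
def lammin {n : ℕ} (M : Matrix (Fin n) (Fin n) ℝ) : ℝ :=
  if h : M.IsHermitian then ⨅ i, h.eigenvalues i else 0

/-- The positive semidefinite square root (the former Mathlib `Matrix.PosSemidef.sqrt`). -/
def Matrix.PosSemidef.sqrt {n : Type*} [Fintype n] [DecidableEq n] {A : Matrix n n ℝ}
    (hA : A.PosSemidef) : Matrix n n ℝ :=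
  (hA.1.eigenvectorUnitary : Matrix n n ℝ) * diagonal ((√·) ∘ hA.1.eigenvalues) *
    (star hA.1.eigenvectorUnitary : Matrix n n ℝ)

/-- Local norm `‖V‖_X = ‖V (XᵀX)^{1/2}‖_F`. -/
def locNorm {d r : ℕ} (X V : Matrix (Fin d) (Fin r) ℝ) : ℝ :=
  frob (V * (Matrix.posSemidef_conjTranspose_mul_self X).sqrt)

/-- Dual local norm `‖V‖_X* = ‖V (XᵀX)^{-1/2}‖_F`. -/
def dualNorm {d r : ℕ} (X V : Matrix (Fin d) (Fin r) ℝ) : ℝ :=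
  frob (V * ((Matrix.posSemidef_conjTranspose_mul_self X).sqrt)⁻¹)

/-- Leverage score / coherence `g_k(X) = e_kᵀ X (XᵀX)⁻¹ Xᵀ e_k`. -/
def lev {d r : ℕ} (k : Fin d) (X : Matrix (Fin d) (Fin r) ℝ) : ℝ :=
  (X * (Xᴴ * X)⁻¹ * Xᴴ) k k

/-- Gradient of the leverage score `∇g_k(X)`. -/
def levGrad {d r : ℕ} (k : Fin d) (X : Matrix (Fin d) (Fin r) ℝ) :
    Matrix (Fin d) (Fin r) ℝ :=
  (2 : ℝ) • ((1 - X * (Xᴴ * X)⁻¹ * Xᴴ) * Matrix.single k k (1 : ℝ) * X * (Xᴴ * X)⁻¹)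

/-- Stochastic gradient sample `SG(X)` for the index pair `(i,j)`. -/
def SG {d r : ℕ} (X Z : Matrix (Fin d) (Fin r) ℝ) (i j : Fin d) :
    Matrix (Fin d) (Fin r) ℝ :=
  (2 * (d : ℝ) ^ 2 * ((X * Xᴴ - Z * Zᴴ) i j)) •
    ((Matrix.single i j (1 : ℝ) + Matrix.single j i (1 : ℝ)) * X)


/-!
Write `B = (XᵀX)⁻¹` and `E = XXᵀ - ZZᵀ`. Then `ZZᵀXB²Xᵀ = XBXᵀ - E · XB²Xᵀ`, where `XBXᵀ` is an
orthogonal projection and `‖XB²Xᵀ‖ = ‖B‖ = 1 / λ_min(XᵀX)`. As `‖E‖ ≤ ‖E‖_F ≤ ρμ` with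
`μ = λ_min(ZᵀZ)`, everything reduces to the Weyl-type bound `λ_min(XᵀX) ≥ μ - ‖E‖ ≥ (1 - ρ)μ`.
It comes from `N = XᵀZ`: conjugating `E ≥ -‖E‖` by `Z` and by `X` gives
`(ZᵀZ)² - ‖E‖ ZᵀZ ≤ NᵀN` and `NNᵀ ≤ (XᵀX)² + ‖E‖ XᵀX`, and `NᵀN`, `NNᵀ` have the same spectrum.
-/

open scoped MatrixOrder Matrix.Norms.L2Operator

namespace Matrix

variable {m n : Type*} [Fintype m] [Fintype n]

theorem spectrum_mul_comm [DecidableEq n] {K : Type*} [Field K] (A B : Matrix n n K) :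
    spectrum K (A * B) = spectrum K (B * A) := by
  ext t
  rcases eq_or_ne t 0 with rfl | ht
  · simp only [spectrum.zero_mem_iff, isUnit_iff_isUnit_det, det_mul_comm]
  · simpa [ht] using congrArg (t ∈ ·) (spectrum.nonzero_mul_comm A B)

theorem algebraMap_le_mul_conjTranspose_self_iff [DecidableEq n] (N : Matrix n n ℝ) (c : ℝ) :
    algebraMap ℝ (Matrix n n ℝ) c ≤ N * Nᴴ ↔ algebraMap ℝ (Matrix n n ℝ) c ≤ Nᴴ * N := by
  rw [algebraMap_le_iff_le_spectrum (isHermitian_mul_conjTranspose_self N).isSelfAdjoint,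
    algebraMap_le_iff_le_spectrum (isHermitian_conjTranspose_mul_self N).isSelfAdjoint,
    spectrum_mul_comm]

theorem conjTranspose_mul_mul_le_conjTranspose_mul_mul {A B : Matrix m m ℝ} (h : A ≤ B)
    (C : Matrix m n ℝ) : Cᴴ * A * C ≤ Cᴴ * B * C := by
  rw [le_iff, ← Matrix.sub_mul, ← Matrix.mul_sub]
  exact (le_iff.mp h).conjTranspose_mul_mul_same C

theorem IsHermitian.algebraMap_neg_l2_opNorm_le [DecidableEq n] {E : Matrix n n ℝ}
    (hE : E.IsHermitian) : algebraMap ℝ (Matrix n n ℝ) (-‖E‖) ≤ E := by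
  rw [algebraMap_le_iff_le_spectrum hE.isSelfAdjoint]
  intro t ht
  have hone : ‖(1 : Matrix n n ℝ)‖ ≤ 1 := by
    rw [cstar_norm_def, map_one]
    exact ContinuousLinearMap.norm_id_le
  have ht := spectrum.norm_le_norm_mul_of_mem ht
  rw [Real.norm_eq_abs] at ht
  nlinarith [neg_abs_le t, norm_nonneg E]

theorem algebraMap_mul_sub_le_mul_self_sub_smul [DecidableEq n] {G : Matrix n n ℝ}
    (hG : G.IsHermitian) {μ ε : ℝ} (hμ : algebraMap ℝ (Matrix n n ℝ) μ ≤ G) (hεμ : ε ≤ 2 * μ) :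
    algebraMap ℝ (Matrix n n ℝ) (μ * (μ - ε)) ≤ G * G - ε • G := by
  have hG := hG.isSelfAdjoint
  have hspec := (algebraMap_le_iff_le_spectrum hG).mp hμ
  rw [show G * G - ε • G = cfc (fun t : ℝ => t * t - ε * t) G by
      rw [cfc_sub .., cfc_mul .., cfc_const_mul .., cfc_id' ℝ G],
    algebraMap_le_cfc_iff _ _ _ (ha := hG)]
  intro t ht
  nlinarith [hspec t ht]

theorem algebraMap_le_of_algebraMap_le_mul_self_add_smul [DecidableEq n] {A : Matrix n n ℝ}
    (hA : A.PosSemidef) {c ε : ℝ} (hε : 0 ≤ ε)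
    (h : algebraMap ℝ (Matrix n n ℝ) (c * (c + ε)) ≤ A * A + ε • A) :
    algebraMap ℝ (Matrix n n ℝ) c ≤ A := by
  have hA' := hA.1.isSelfAdjoint
  rw [show A * A + ε • A = cfc (fun t : ℝ => t * t + ε * t) A by
      rw [cfc_add .., cfc_mul .., cfc_const_mul .., cfc_id' ℝ A],
    algebraMap_le_cfc_iff _ _ _ (ha := hA')] at h
  rw [algebraMap_le_iff_le_spectrum hA']
  intro t ht
  have ht0 : 0 ≤ t := spectrum_nonneg_of_nonneg hA.nonneg ht
  nlinarith [h t ht]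

theorem algebraMap_sub_le_conjTranspose_mul_self [DecidableEq m] [DecidableEq n]
    {X Z : Matrix m n ℝ} {μ ε : ℝ} (hZ : algebraMap ℝ (Matrix n n ℝ) μ ≤ Zᴴ * Z)
    (hE : algebraMap ℝ (Matrix m m ℝ) (-ε) ≤ X * Xᴴ - Z * Zᴴ) (hε : 0 ≤ ε) :
    algebraMap ℝ (Matrix n n ℝ) (μ - ε) ≤ Xᴴ * X := by
  have hX := posSemidef_conjTranspose_mul_self X
  rcases le_or_gt μ ε with hμε | hεμ
  · rw [algebraMap_le_iff_le_spectrum hX.1.isSelfAdjoint]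
    exact fun t ht => (sub_nonpos.mpr hμε).trans (spectrum_nonneg_of_nonneg hX.nonneg ht)
  set E := X * Xᴴ - Z * Zᴴ
  set N := Xᴴ * Z
  have hZN : Zᴴ * Z * (Zᴴ * Z) - ε • (Zᴴ * Z) ≤ Nᴴ * N := by
    have h := conjTranspose_mul_mul_le_conjTranspose_mul_mul hE Z
    rw [Algebra.algebraMap_eq_smul_one, Matrix.mul_smul, Matrix.mul_one, Matrix.smul_mul,
      neg_smul] at h
    have hNN : Nᴴ * N = Zᴴ * Z * (Zᴴ * Z) + Zᴴ * E * Z := by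
      simp only [N, E, conjTranspose_mul, conjTranspose_conjTranspose, Matrix.mul_sub,
        Matrix.sub_mul, Matrix.mul_assoc]
      abel
    rw [hNN, sub_eq_add_neg]
    gcongr
  have hNX : N * Nᴴ ≤ Xᴴ * X * (Xᴴ * X) + ε • (Xᴴ * X) := by
    have h := conjTranspose_mul_mul_le_conjTranspose_mul_mul hE X
    rw [Algebra.algebraMap_eq_smul_one, Matrix.mul_smul, Matrix.mul_one, Matrix.smul_mul,
      neg_smul, neg_le] at h
    have hNN : N * Nᴴ = Xᴴ * X * (Xᴴ * X) - Xᴴ * E * X := by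
      simp only [N, E, conjTranspose_mul, conjTranspose_conjTranspose, Matrix.mul_sub,
        Matrix.sub_mul, Matrix.mul_assoc]
      abel
    rw [hNN, sub_eq_add_neg]
    gcongr
  have hZ2 := algebraMap_mul_sub_le_mul_self_sub_smul (isHermitian_conjTranspose_mul_self Z) hZ
    (ε := ε) (by linarith)
  refine algebraMap_le_of_algebraMap_le_mul_self_add_smul hX hε ?_
  rw [sub_add_cancel, mul_comm]
  exact ((algebraMap_le_mul_conjTranspose_self_iff N _).mpr (hZ2.trans hZN)).trans hNX

theorem l2_opNorm_inv_le [DecidableEq n] {A : Matrix n n ℝ} {κ : ℝ} (hκ : 0 < κ)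
    (hA : algebraMap ℝ (Matrix n n ℝ) κ ≤ A) : ‖A⁻¹‖ ≤ κ⁻¹ := by
  have hA' : IsSelfAdjoint A := by
    simpa using (le_iff.mp hA).1.isSelfAdjoint.add ((IsSelfAdjoint.all κ).algebraMap _)
  have hunit : IsUnit A := by
    refine spectrum.isUnit_of_zero_notMem ℝ fun h0 => ?_
    linarith [(algebraMap_le_iff_le_spectrum hA').mp hA 0 h0]
  have hcoercive (y : EuclideanSpace ℝ n) :
      κ * ‖y‖ ^ 2 ≤ inner ℝ (toEuclideanCLM (𝕜 := ℝ) A y) y := by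
    have := (isPositive_toEuclideanLin_iff.mpr (le_iff.mp hA)).inner_nonneg_left y
    simp only [map_sub, LinearMap.sub_apply, inner_sub_left, Algebra.algebraMap_eq_smul_one,
      map_smul, LinearMap.smul_apply, toLpLin_one, LinearMap.id_apply, real_inner_smul_left,
      real_inner_self_eq_norm_sq, sub_nonneg] at this
    exact this
  rw [cstar_norm_def]
  refine ContinuousLinearMap.opNorm_le_bound _ (by positivity) fun x => ?_
  set y := toEuclideanCLM (𝕜 := ℝ) A⁻¹ x
  have hy : toEuclideanCLM (𝕜 := ℝ) A y = x := by
    change (toEuclideanCLM (𝕜 := ℝ) A * toEuclideanCLM (𝕜 := ℝ) A⁻¹) x = x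
    rw [← map_mul, mul_nonsing_inv _ ((isUnit_iff_isUnit_det A).mp hunit), map_one]
    rfl
  have h1 := hcoercive y
  rw [hy, real_inner_comm] at h1
  have h2 := real_inner_le_norm y x
  rw [inv_mul_eq_div, le_div_iff₀ hκ]
  rcases (norm_nonneg y).eq_or_lt with hy0 | hy0
  · rw [← hy0, zero_mul]
    exact norm_nonneg x
  · nlinarith

theorem isStarProjection_mul_inv_mul_conjTranspose [DecidableEq n] {X : Matrix m n ℝ}
    (hX : IsUnit (Xᴴ * X).det) : IsStarProjection (X * (Xᴴ * X)⁻¹ * Xᴴ) where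
  isIdempotentElem := by
    rw [IsIdempotentElem]
    simp only [Matrix.mul_assoc]
    rw [← Matrix.mul_assoc Xᴴ X, nonsing_inv_mul_cancel_left _ _ hX]
  isSelfAdjoint := by
    rw [IsSelfAdjoint, star_eq_conjTranspose, conjTranspose_mul, conjTranspose_mul,
      conjTranspose_conjTranspose, (isHermitian_conjTranspose_mul_self X).inv, Matrix.mul_assoc]

theorem l2_opNorm_mul_inv_mul_inv_mul_conjTranspose [DecidableEq m] [DecidableEq n]
    {X : Matrix m n ℝ} (hX : IsUnit (Xᴴ * X).det) :
    ‖X * ((Xᴴ * X)⁻¹ * (Xᴴ * X)⁻¹) * Xᴴ‖ = ‖(Xᴴ * X)⁻¹‖ := by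
  set B := (Xᴴ * X)⁻¹
  have hB : Bᴴ = B := (isHermitian_conjTranspose_mul_self X).inv
  have h1 : X * (B * B) * Xᴴ = (X * B)ᴴᴴ * (X * B)ᴴ := by
    rw [conjTranspose_conjTranspose, conjTranspose_mul, hB]
    simp only [Matrix.mul_assoc]
  have h2 : (X * B)ᴴ * (X * B) = B := by
    rw [conjTranspose_mul, hB, Matrix.mul_assoc, ← Matrix.mul_assoc Xᴴ,
      nonsing_inv_mul_cancel_left _ _ hX]
  rw [h1, l2_opNorm_conjTranspose_mul_self, l2_opNorm_conjTranspose,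
    ← l2_opNorm_conjTranspose_mul_self, h2]

theorem l2_opNorm_mul_mul_inv_mul_inv_mul_conjTranspose_le [DecidableEq m] [DecidableEq n]
    (W : Matrix m m ℝ) {X : Matrix m n ℝ} (hX : IsUnit (Xᴴ * X).det) :
    ‖W * X * ((Xᴴ * X)⁻¹ * (Xᴴ * X)⁻¹) * Xᴴ‖ ≤ 1 + ‖X * Xᴴ - W‖ * ‖(Xᴴ * X)⁻¹‖ := by
  set B := (Xᴴ * X)⁻¹
  have hdecomp : W * X * (B * B) * Xᴴ = X * B * Xᴴ - (X * Xᴴ - W) * (X * (B * B) * Xᴴ) := by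
    have hP : X * Xᴴ * (X * (B * B) * Xᴴ) = X * B * Xᴴ := by
      simp only [Matrix.mul_assoc]
      rw [← Matrix.mul_assoc Xᴴ X, mul_nonsing_inv_cancel_left _ _ hX]
    rw [Matrix.sub_mul, hP, sub_sub_cancel]
    simp only [Matrix.mul_assoc]
  rw [hdecomp, ← l2_opNorm_mul_inv_mul_inv_mul_conjTranspose hX]
  exact (norm_sub_le _ _).trans (add_le_add
    (isStarProjection_mul_inv_mul_conjTranspose hX).norm_le (norm_mul_le _ _))

end Matrix

theorem l2_opNorm_le_frob {m n : ℕ} (A : Matrix (Fin m) (Fin n) ℝ) : ‖A‖ ≤ frob A := by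
  rw [l2_opNorm_def]
  refine ContinuousLinearMap.opNorm_le_bound _ (Real.sqrt_nonneg _) fun x => ?_
  refine (sq_le_sq₀ (norm_nonneg _) (mul_nonneg (Real.sqrt_nonneg _) (norm_nonneg _))).mp ?_
  rw [mul_pow, Real.sq_sqrt (by positivity), EuclideanSpace.norm_sq_eq,
    EuclideanSpace.norm_sq_eq, Finset.sum_mul]
  gcongr with i
  simpa [mulVec, dotProduct, sq_abs] using Finset.sum_mul_sq_le_sq_mul_sq _ (A i) x

theorem lammin_nonneg {n : ℕ} {M : Matrix (Fin n) (Fin n) ℝ} (hM : M.PosSemidef) :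
    0 ≤ lammin M := by
  rw [lammin, dif_pos hM.1]
  exact Real.iInf_nonneg hM.eigenvalues_nonneg

theorem lammin_pos {n : ℕ} [Nonempty (Fin n)] {M : Matrix (Fin n) (Fin n) ℝ} (hM : M.PosDef) :
    0 < lammin M := by
  obtain ⟨i, hi⟩ := exists_eq_ciInf_of_finite (f := hM.1.eigenvalues)
  rw [lammin, dif_pos hM.1, ← hi]
  exact hM.eigenvalues_pos i

theorem algebraMap_le_iff_le_lammin {n : ℕ} [Nonempty (Fin n)] {M : Matrix (Fin n) (Fin n) ℝ}
    (hM : M.IsHermitian) {c : ℝ} :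
    algebraMap ℝ (Matrix (Fin n) (Fin n) ℝ) c ≤ M ↔ c ≤ lammin M := by
  rw [lammin, dif_pos hM, le_ciInf_iff (Finite.bddBelow_range _),
    algebraMap_le_iff_le_spectrum hM.isSelfAdjoint, hM.spectrum_real_eq_range_eigenvalues]
  simp

theorem lammin_sub_l2_opNorm_le_lammin {d r : ℕ} [Nonempty (Fin r)]
    (X Z : Matrix (Fin d) (Fin r) ℝ) :
    lammin (Zᴴ * Z) - ‖X * Xᴴ - Z * Zᴴ‖ ≤ lammin (Xᴴ * X) :=
  (algebraMap_le_iff_le_lammin (isHermitian_conjTranspose_mul_self X)).mp <|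
    algebraMap_sub_le_conjTranspose_mul_self
      ((algebraMap_le_iff_le_lammin (isHermitian_conjTranspose_mul_self Z)).mpr le_rfl)
      ((isHermitian_mul_conjTranspose_self X).sub
        (isHermitian_mul_conjTranspose_self Z)).algebraMap_neg_l2_opNorm_le
      (norm_nonneg _)

open scoped Matrix.Norms.L2Operator in
/-- Spectral-norm bound `‖ZZᵀX(XᵀX)⁻²Xᵀ‖ ≤ 1/(1-ρ)`. -/
theorem spectral_norm_bound {d r : ℕ} (X Z : Matrix (Fin d) (Fin r) ℝ) (ρ : ℝ)
    (hρ : ρ < 1 / 2) (hX : IsUnit (Xᴴ * X).det)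
    (h : frob (X * Xᴴ - Z * Zᴴ) ≤ ρ * lammin (Zᴴ * Z)) :
    ‖Z * Zᴴ * X * ((Xᴴ * X)⁻¹ * (Xᴴ * X)⁻¹) * Xᴴ‖ ≤ 1 / (1 - ρ) := by
  rcases isEmpty_or_nonempty (Fin r) with hr | hr
  · have hZ : Z * Zᴴ = 0 := by ext; simp [mul_apply]
    rw [hZ, Matrix.zero_mul, Matrix.zero_mul, Matrix.zero_mul, norm_zero]
    exact div_nonneg zero_le_one (by linarith)
  set E := X * Xᴴ - Z * Zᴴ
  set μ := lammin (Zᴴ * Z)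
  have hA : (Xᴴ * X).PosDef := (posSemidef_conjTranspose_mul_self X).posDef_iff_isUnit.mpr
    ((isUnit_iff_isUnit_det _).mpr hX)
  have hEμ : ‖E‖ ≤ ρ * μ := (l2_opNorm_le_frob E).trans h
  -- Weyl with `X` and `Z` exchanged: `0 < λ_min(XᵀX) ≤ μ + ‖E‖ ≤ (1 + ρ) μ`.
  have hμ : 0 < μ := by
    have hXZ := lammin_sub_l2_opNorm_le_lammin Z X
    rw [norm_sub_rev] at hXZ
    nlinarith [lammin_pos hA, lammin_nonneg (posSemidef_conjTranspose_mul_self Z), norm_nonneg E]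
  have hκ : 0 < μ - ‖E‖ := by nlinarith
  have hB : ‖(Xᴴ * X)⁻¹‖ ≤ (μ - ‖E‖)⁻¹ :=
    (l2_opNorm_inv_le (lammin_pos hA) ((algebraMap_le_iff_le_lammin hA.1).mpr le_rfl)).trans
      (inv_anti₀ hκ (lammin_sub_l2_opNorm_le_lammin X Z))
  calc _ ≤ 1 + ‖E‖ * ‖(Xᴴ * X)⁻¹‖ := l2_opNorm_mul_mul_inv_mul_inv_mul_conjTranspose_le _ hX
    _ ≤ 1 + ‖E‖ * (μ - ‖E‖)⁻¹ := by gcongr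
    _ ≤ 1 / (1 - ρ) := by
      rw [← div_eq_mul_inv, one_add_div hκ.ne', div_le_div_iff₀ hκ (by linarith)]
      nlinarith
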